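/- arXiv:hep-th/9711176 — 2 statements merged into one kernel-verified Lean document; each statement's English description precedes it below -/
import Mathlib

section
/- Suppose complex symmetric matrices Y_α (α = 1,...,m) of size n×n, positive reals y_F^i, y_B^α, and nonnegative reals C_F^i satisfy the standard-form Yukawa finiteness condition: 4 Σ_{β=1}^m (Y_β Y^{†α} Y_β)_{ij} + Y_{αij} (2 y_B^α + y_F^i + y_F^j − 6g² C_F^i − 6g² C_F^j) = 0 for all i,j,α, where Σ_β (Y^{†β} Y_β)^i_j = δ^i_j y_F^i and Tr_F(Y^{†α} Y_β + Y^{†β} Y_α) = 2 δ^α_β y_B^α. Then E(Y) := 6g² Σ_i C_F^i y_F^i satisfies Σ_i (y_F^i)² ≤ E(Y) ≤ 36g⁴ Σ_i (C_F^i)². -/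
open Matrix
open ComplexConjugate

section YukawaAux

variable {m n : ℕ}

/-- `Q_{ijkl} = ∑ α, Y α i j * Y α k l`. -/
private noncomputable def QQ (Y : Fin m → Matrix (Fin n) (Fin n) ℂ) (i j k l : Fin n) : ℂ :=
  ∑ α, Y α i j * Y α k l

/-- swap the 2nd and 3rd summation -/
private lemma sw1 {A B C M : Type*} [Fintype A] [Fintype B] [Fintype C] [AddCommMonoid M]
    (f : A → B → C → M) :
    ∑ a, ∑ b, ∑ c, f a b c = ∑ a, ∑ c, ∑ b, f a b c :=
  Finset.sum_congr rfl fun _ _ => Finset.sum_comm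

/-- swap the 3rd and 4th summation -/
private lemma sw2 {A B C D M : Type*} [Fintype A] [Fintype B] [Fintype C] [Fintype D]
    [AddCommMonoid M] (f : A → B → C → D → M) :
    ∑ a, ∑ b, ∑ c, ∑ d, f a b c d = ∑ a, ∑ b, ∑ d, ∑ c, f a b c d :=
  Finset.sum_congr rfl fun a _ => sw1 (f a)

/-- swap the 4th and 5th summation -/
private lemma sw3 {A B C D E M : Type*} [Fintype A] [Fintype B] [Fintype C] [Fintype D]
    [Fintype E] [AddCommMonoid M] (f : A → B → C → D → E → M) :
    ∑ a, ∑ b, ∑ c, ∑ d, ∑ e, f a b c d e = ∑ a, ∑ b, ∑ c, ∑ e, ∑ d, f a b c d e :=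
  Finset.sum_congr rfl fun a _ => sw2 (f a)

/-- swap the 5th and 6th summation -/
private lemma sw4 {A B C D E F M : Type*} [Fintype A] [Fintype B] [Fintype C] [Fintype D]
    [Fintype E] [Fintype F] [AddCommMonoid M] (f : A → B → C → D → E → F → M) :
    ∑ a, ∑ b, ∑ c, ∑ d, ∑ e, ∑ x, f a b c d e x
      = ∑ a, ∑ b, ∑ c, ∑ d, ∑ x, ∑ e, f a b c d e x :=
  Finset.sum_congr rfl fun a _ => sw3 (f a)

/-- reorder `(α i j β k l) ↦ (i j k l α β)` -/
private lemma sum_comm6a {A B : Type*} [Fintype A] [Fintype B]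
    (f : A → B → B → A → B → B → ℂ) :
    ∑ α, ∑ i, ∑ j, ∑ β, ∑ k, ∑ l, f α i j β k l
      = ∑ i, ∑ j, ∑ k, ∑ l, ∑ α, ∑ β, f α i j β k l := by
  calc ∑ α, ∑ i, ∑ j, ∑ β, ∑ k, ∑ l, f α i j β k l
      = ∑ α, ∑ i, ∑ j, ∑ k, ∑ β, ∑ l, f α i j β k l := sw3 _
    _ = ∑ α, ∑ i, ∑ j, ∑ k, ∑ l, ∑ β, f α i j β k l := sw4 _
    _ = ∑ i, ∑ α, ∑ j, ∑ k, ∑ l, ∑ β, f α i j β k l := Finset.sum_comm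
    _ = ∑ i, ∑ j, ∑ α, ∑ k, ∑ l, ∑ β, f α i j β k l := sw1 _
    _ = ∑ i, ∑ j, ∑ k, ∑ α, ∑ l, ∑ β, f α i j β k l := sw2 _
    _ = ∑ i, ∑ j, ∑ k, ∑ l, ∑ α, ∑ β, f α i j β k l := sw3 _

/-- reorder `(α β i j k l) ↦ (i j k l α β)` -/
private lemma sum_comm6b {A B : Type*} [Fintype A] [Fintype B]
    (f : A → A → B → B → B → B → ℂ) :
    ∑ α, ∑ β, ∑ i, ∑ j, ∑ k, ∑ l, f α β i j k l
      = ∑ i, ∑ j, ∑ k, ∑ l, ∑ α, ∑ β, f α β i j k l := by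
  calc ∑ α, ∑ β, ∑ i, ∑ j, ∑ k, ∑ l, f α β i j k l
      = ∑ α, ∑ i, ∑ β, ∑ j, ∑ k, ∑ l, f α β i j k l := sw1 _
    _ = ∑ i, ∑ α, ∑ β, ∑ j, ∑ k, ∑ l, f α β i j k l := Finset.sum_comm
    _ = ∑ i, ∑ α, ∑ j, ∑ β, ∑ k, ∑ l, f α β i j k l := sw2 _
    _ = ∑ i, ∑ j, ∑ α, ∑ β, ∑ k, ∑ l, f α β i j k l := sw1 _
    _ = ∑ i, ∑ j, ∑ α, ∑ k, ∑ β, ∑ l, f α β i j k l := sw3 _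
    _ = ∑ i, ∑ j, ∑ k, ∑ α, ∑ β, ∑ l, f α β i j k l := sw2 _
    _ = ∑ i, ∑ j, ∑ k, ∑ α, ∑ l, ∑ β, f α β i j k l := sw4 _
    _ = ∑ i, ∑ j, ∑ k, ∑ l, ∑ α, ∑ β, f α β i j k l := sw3 _

variable (Y : Fin m → Matrix (Fin n) (Fin n) ℂ)

private lemma qswap (hsym : ∀ α i j, Y α j i = Y α i j) (i j k l : Fin n) :
    QQ Y i j l k = QQ Y i j k l :=
  Finset.sum_congr rfl fun α _ => by rw [hsym α k l]

private lemma conj_sum4 {B : Type*} [Fintype B] (f g : B → B → B → B → ℂ) :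
    conj (∑ i, ∑ j, ∑ k, ∑ l, conj (f i j k l) * g i j k l)
      = ∑ i, ∑ j, ∑ k, ∑ l, conj (g i j k l) * f i j k l := by
  simp only [map_sum, _root_.map_mul, Complex.conj_conj]
  exact Finset.sum_congr rfl fun i _ => Finset.sum_congr rfl fun j _ =>
    Finset.sum_congr rfl fun k _ => Finset.sum_congr rfl fun l _ => mul_comm _ _

private lemma cA (hsym : ∀ α i j, Y α j i = Y α i j) :
    (∑ i, ∑ j, ∑ k, ∑ l, conj (QQ Y i j k l) * QQ Y i k j l)
      = ∑ i, ∑ j, ∑ k, ∑ l, conj (QQ Y i j k l) * QQ Y i l j k := by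
  refine Finset.sum_congr rfl fun i _ => Finset.sum_congr rfl fun j _ => ?_
  rw [Finset.sum_comm]
  refine Finset.sum_congr rfl fun k _ => Finset.sum_congr rfl fun l _ => ?_
  rw [qswap Y hsym i j k l]

private lemma cB (hsym : ∀ α i j, Y α j i = Y α i j) :
    (∑ i, ∑ j, ∑ k, ∑ l, conj (QQ Y i k j l) * QQ Y i l j k)
      = ∑ i, ∑ j, ∑ k, ∑ l, conj (QQ Y i j k l) * QQ Y i l j k := by
  refine Finset.sum_congr rfl fun i _ => ?_
  rw [Finset.sum_comm]
  refine Finset.sum_congr rfl fun j _ => Finset.sum_congr rfl fun k _ =>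
    Finset.sum_congr rfl fun l _ => ?_
  rw [qswap Y hsym i l j k]

private lemma dA :
    (∑ i, ∑ j, ∑ k, ∑ l, conj (QQ Y i k j l) * QQ Y i k j l)
      = ∑ i, ∑ j, ∑ k, ∑ l, conj (QQ Y i j k l) * QQ Y i j k l :=
  Finset.sum_congr rfl fun _ _ => Finset.sum_comm

private lemma dB :
    (∑ i, ∑ j, ∑ k, ∑ l, conj (QQ Y i l j k) * QQ Y i l j k)
      = ∑ i, ∑ j, ∑ k, ∑ l, conj (QQ Y i j k l) * QQ Y i j k l := by
  refine Finset.sum_congr rfl fun i _ => ?_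
  rw [sw1 fun a b c => conj (QQ Y i c a b) * QQ Y i c a b]
  exact Finset.sum_comm

private lemma eA (hsym : ∀ α i j, Y α j i = Y α i j) :
    (∑ i, ∑ j, ∑ k, ∑ l, conj (QQ Y i k j l) * QQ Y i j k l)
      = conj (∑ i, ∑ j, ∑ k, ∑ l, conj (QQ Y i j k l) * QQ Y i l j k) := by
  have h := conj_sum4 (fun i j k l => QQ Y i j k l) (fun i j k l => QQ Y i k j l)
  rw [cA Y hsym] at h
  exact h.symm

private lemma eB :
    (∑ i, ∑ j, ∑ k, ∑ l, conj (QQ Y i l j k) * QQ Y i j k l)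
      = conj (∑ i, ∑ j, ∑ k, ∑ l, conj (QQ Y i j k l) * QQ Y i l j k) := by
  have h := conj_sum4 (fun i j k l => QQ Y i j k l) (fun i j k l => QQ Y i l j k)
  exact h.symm

private lemma eC (hsym : ∀ α i j, Y α j i = Y α i j) :
    (∑ i, ∑ j, ∑ k, ∑ l, conj (QQ Y i l j k) * QQ Y i k j l)
      = conj (∑ i, ∑ j, ∑ k, ∑ l, conj (QQ Y i j k l) * QQ Y i l j k) := by
  have h := conj_sum4 (fun i j k l => QQ Y i k j l) (fun i j k l => QQ Y i l j k)
  rw [cB Y hsym] at h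
  exact h.symm

/-- the symmetrization identity: `‖Q₁+Q₂+Q₃‖² = 3‖Q‖² + 3 T + 3 conj T`. -/
private lemma keyQ (hsym : ∀ α i j, Y α j i = Y α i j) :
    (∑ i, ∑ j, ∑ k, ∑ l, conj (QQ Y i j k l + QQ Y i k j l + QQ Y i l j k)
        * (QQ Y i j k l + QQ Y i k j l + QQ Y i l j k))
      = 3 * (∑ i, ∑ j, ∑ k, ∑ l, conj (QQ Y i j k l) * QQ Y i j k l)
        + 3 * (∑ i, ∑ j, ∑ k, ∑ l, conj (QQ Y i j k l) * QQ Y i l j k)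
        + 3 * conj (∑ i, ∑ j, ∑ k, ∑ l, conj (QQ Y i j k l) * QQ Y i l j k) := by
  have hexp : ∀ a b c : ℂ, conj (a + b + c) * (a + b + c) =
      conj a * a + conj a * b + conj a * c + conj b * a + conj b * b + conj b * c
        + conj c * a + conj c * b + conj c * c := by
    intro a b c; simp only [map_add]; ring
  calc (∑ i, ∑ j, ∑ k, ∑ l, conj (QQ Y i j k l + QQ Y i k j l + QQ Y i l j k)
        * (QQ Y i j k l + QQ Y i k j l + QQ Y i l j k))
      = ∑ i, ∑ j, ∑ k, ∑ l,
          (conj (QQ Y i j k l) * QQ Y i j k l + conj (QQ Y i j k l) * QQ Y i k j l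
            + conj (QQ Y i j k l) * QQ Y i l j k + conj (QQ Y i k j l) * QQ Y i j k l
            + conj (QQ Y i k j l) * QQ Y i k j l + conj (QQ Y i k j l) * QQ Y i l j k
            + conj (QQ Y i l j k) * QQ Y i j k l + conj (QQ Y i l j k) * QQ Y i k j l
            + conj (QQ Y i l j k) * QQ Y i l j k) :=
        Finset.sum_congr rfl fun i _ => Finset.sum_congr rfl fun j _ =>
          Finset.sum_congr rfl fun k _ => Finset.sum_congr rfl fun l _ => hexp _ _ _
    _ = (∑ i, ∑ j, ∑ k, ∑ l, conj (QQ Y i j k l) * QQ Y i j k l)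
        + (∑ i, ∑ j, ∑ k, ∑ l, conj (QQ Y i j k l) * QQ Y i k j l)
        + (∑ i, ∑ j, ∑ k, ∑ l, conj (QQ Y i j k l) * QQ Y i l j k)
        + (∑ i, ∑ j, ∑ k, ∑ l, conj (QQ Y i k j l) * QQ Y i j k l)
        + (∑ i, ∑ j, ∑ k, ∑ l, conj (QQ Y i k j l) * QQ Y i k j l)
        + (∑ i, ∑ j, ∑ k, ∑ l, conj (QQ Y i k j l) * QQ Y i l j k)
        + (∑ i, ∑ j, ∑ k, ∑ l, conj (QQ Y i l j k) * QQ Y i j k l)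
        + (∑ i, ∑ j, ∑ k, ∑ l, conj (QQ Y i l j k) * QQ Y i k j l)
        + (∑ i, ∑ j, ∑ k, ∑ l, conj (QQ Y i l j k) * QQ Y i l j k) := by
        simp only [Finset.sum_add_distrib]
    _ = _ := by
        rw [cA Y hsym, eA Y hsym, dA Y, cB Y hsym, eB Y, eC Y hsym, dB Y]
        ring

/-- factor `∑ conj Q * Q` through the Gram matrix `K`. -/
private lemma factorK :
    (∑ i, ∑ j, ∑ k, ∑ l, conj (QQ Y i j k l) * QQ Y i j k l)
      = ∑ α, ∑ β, (∑ j, ∑ i, conj (Y α i j) * Y β i j)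
          * (∑ j, ∑ i, conj (Y α i j) * Y β i j) := by
  calc (∑ i, ∑ j, ∑ k, ∑ l, conj (QQ Y i j k l) * QQ Y i j k l)
      = ∑ i, ∑ j, ∑ k, ∑ l, ∑ α, ∑ β,
          (conj (Y α i j) * conj (Y α k l)) * (Y β i j * Y β k l) := by
        refine Finset.sum_congr rfl fun i _ => Finset.sum_congr rfl fun j _ =>
          Finset.sum_congr rfl fun k _ => Finset.sum_congr rfl fun l _ => ?_
        simp only [QQ, map_sum, _root_.map_mul]
        rw [Finset.sum_mul_sum]
    _ = ∑ α, ∑ β, ∑ i, ∑ j, ∑ k, ∑ l,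
          (conj (Y α i j) * conj (Y α k l)) * (Y β i j * Y β k l) := (sum_comm6b _).symm
    _ = ∑ α, ∑ β, (∑ j, ∑ i, conj (Y α i j) * Y β i j)
          * (∑ j, ∑ i, conj (Y α i j) * Y β i j) := by
        refine Finset.sum_congr rfl fun α _ => Finset.sum_congr rfl fun β _ => ?_
        calc (∑ i, ∑ j, ∑ k, ∑ l, (conj (Y α i j) * conj (Y α k l)) * (Y β i j * Y β k l))
            = ∑ j, ∑ i, ∑ k, ∑ l,
                (conj (Y α i j) * conj (Y α k l)) * (Y β i j * Y β k l) := Finset.sum_comm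
          _ = ∑ j, ∑ i, ∑ l, ∑ k,
                (conj (Y α i j) * conj (Y α k l)) * (Y β i j * Y β k l) := sw2 _
          _ = ∑ j, ∑ l, ∑ i, ∑ k,
                (conj (Y α i j) * conj (Y α k l)) * (Y β i j * Y β k l) := sw1 _
          _ = (∑ j, ∑ i, conj (Y α i j) * Y β i j)
                * (∑ j, ∑ i, conj (Y α i j) * Y β i j) := by
              simp only [Finset.sum_mul_sum]
              refine Finset.sum_congr rfl fun j _ => Finset.sum_congr rfl fun l _ => ?_
              refine Finset.sum_congr rfl fun i _ => Finset.sum_congr rfl fun k _ => ?_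
              ring

/-- factor the contracted quartic term through `Q`. -/
private lemma factorT (hsym : ∀ α i j, Y α j i = Y α i j) :
    (∑ α, ∑ i, ∑ j, ∑ β, ∑ k, ∑ l,
        conj (Y α i j) * (Y β i l * conj (Y α k l) * Y β k j))
      = ∑ i, ∑ j, ∑ k, ∑ l, conj (QQ Y i j k l) * QQ Y i l j k := by
  rw [sum_comm6a]
  refine Finset.sum_congr rfl fun i _ => Finset.sum_congr rfl fun j _ =>
    Finset.sum_congr rfl fun k _ => Finset.sum_congr rfl fun l _ => ?_
  simp only [QQ, map_sum, _root_.map_mul]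
  rw [Finset.sum_mul_sum]
  refine Finset.sum_congr rfl fun α _ => Finset.sum_congr rfl fun β _ => ?_
  rw [hsym β k j]
  ring

private lemma entry6 (α : Fin m) (i j : Fin n) :
    (∑ β, Y β * (Y α)ᴴ * Y β) i j
      = ∑ β, ∑ k, ∑ l, Y β i l * conj (Y α k l) * Y β k j := by
  rw [Matrix.sum_apply]
  refine Finset.sum_congr rfl fun β _ => ?_
  simp only [Matrix.mul_apply, Matrix.conjTranspose_apply, Finset.sum_mul, Complex.star_def]

private lemma traceK (α β : Fin m) :
    Matrix.trace ((Y α)ᴴ * Y β) = ∑ j, ∑ i, conj (Y α i j) * Y β i j := by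
  simp only [Matrix.trace, Matrix.diag, Matrix.mul_apply, Matrix.conjTranspose_apply,
    Complex.star_def]

end YukawaAux

/-- Bounds on `E(Y) = 6 g² ∑ᵢ C_F^i y_F^i` following from the standard form of the
Yukawa finiteness condition. -/
theorem E_of_Y_bounds (n m : ℕ) (g : ℝ) (hg : 0 < g)
    (Y : Fin m → Matrix (Fin n) (Fin n) ℂ) (hYsymm : ∀ α, (Y α).IsSymm)
    (yF : Fin n → ℝ) (hyF : ∀ i, 0 < yF i)
    (yB : Fin m → ℝ) (hyB : ∀ α, 0 < yB α)
    (CF : Fin n → ℝ) (hCF : ∀ i, 0 ≤ CF i)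
    (hdiagF : ∀ i j, (∑ β, ((Y β)ᴴ * Y β)) i j = if i = j then (yF i : ℂ) else 0)
    (hdiagB : ∀ α β, Matrix.trace ((Y α)ᴴ * Y β + (Y β)ᴴ * Y α) =
      2 * (if α = β then (yB α : ℂ) else 0))
    (hYFC : ∀ (α : Fin m) (i j : Fin n),
      4 * (∑ β, (Y β * (Y α)ᴴ * Y β)) i j +
        Y α i j * ((2 * yB α + yF i + yF j
          - 6 * g ^ 2 * CF i - 6 * g ^ 2 * CF j : ℝ) : ℂ) = 0) :
    (∑ i, (yF i) ^ 2) ≤ 6 * g ^ 2 * ∑ i, CF i * yF i ∧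
      6 * g ^ 2 * ∑ i, CF i * yF i ≤ 36 * g ^ 4 * ∑ i, (CF i) ^ 2 := by
  have hsym : ∀ α i j, Y α j i = Y α i j := fun α i j => (hYsymm α).apply i j
  -- abbreviations for the real sums
  set SF : ℝ := ∑ i, yF i ^ 2 with hSF
  set SB : ℝ := ∑ α, yB α ^ 2 with hSB
  set SC : ℝ := ∑ i, CF i * yF i with hSC
  set SA : ℝ := ∑ i, CF i ^ 2 with hSA
  -- real part of the Gram matrix of the Yukawa couplings
  have hKre : ∀ α β, (∑ j, ∑ i, conj (Y α i j) * Y β i j).re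
      = if α = β then yB α else 0 := by
    intro α β
    have h := hdiagB α β
    rw [Matrix.trace_add, traceK Y α β, traceK Y β α] at h
    have hconj : (∑ j, ∑ i, conj (Y β i j) * Y α i j)
        = conj (∑ j, ∑ i, conj (Y α i j) * Y β i j) := by
      simp only [map_sum, _root_.map_mul, Complex.conj_conj]
      exact Finset.sum_congr rfl fun j _ => Finset.sum_congr rfl fun i _ => mul_comm _ _
    rw [hconj, Complex.add_conj] at h
    split_ifs with hab
    · rw [if_pos hab] at h
      have h2 : (2:ℝ) * (∑ j, ∑ i, conj (Y α i j) * Y β i j).re = 2 * yB α := by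
        exact_mod_cast h
      linarith
    · rw [if_neg hab, mul_zero] at h
      have h2 : (2:ℝ) * (∑ j, ∑ i, conj (Y α i j) * Y β i j).re = 0 := by
        exact_mod_cast h
      linarith
  -- ∑_{ij} |Yα i j|² = yB α
  have hBtr : ∀ α, (∑ i, ∑ j, Complex.normSq (Y α i j)) = yB α := by
    intro α
    have h := hKre α α
    rw [if_pos rfl] at h
    simp only [Complex.re_sum, ← Complex.normSq_eq_conj_mul_self, Complex.ofReal_re] at h
    rw [← h]
    exact Finset.sum_comm
  -- column sums
  have hFj : ∀ j, (∑ α, ∑ i, Complex.normSq (Y α i j)) = yF j := by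
    intro j
    have h := hdiagF j j
    rw [if_pos rfl] at h
    simp only [Matrix.sum_apply, Matrix.mul_apply, Matrix.conjTranspose_apply,
      Complex.star_def] at h
    simp only [← Complex.normSq_eq_conj_mul_self, ← Complex.ofReal_sum] at h
    exact_mod_cast h
  have hFi : ∀ i, (∑ α, ∑ j, Complex.normSq (Y α i j)) = yF i := by
    intro i
    rw [← hFj i]
    exact Finset.sum_congr rfl fun α _ => Finset.sum_congr rfl fun j _ => by
      rw [hsym α i j]
  -- contraction of the YFC with conj (Y α i j)
  have h1 : (∑ α, ∑ i : Fin n, ∑ j : Fin n, conj (Y α i j) *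
      (4 * (∑ β, (Y β * (Y α)ᴴ * Y β)) i j +
        Y α i j * ((2 * yB α + yF i + yF j
          - 6 * g ^ 2 * CF i - 6 * g ^ 2 * CF j : ℝ) : ℂ))) = 0 :=
    Finset.sum_eq_zero fun α _ => Finset.sum_eq_zero fun i _ =>
      Finset.sum_eq_zero fun j _ => by rw [hYFC α i j, mul_zero]
  -- evaluation of the weight part
  have hW : (∑ α, ∑ i, ∑ j, Complex.normSq (Y α i j) *
      (2 * yB α + yF i + yF j - 6 * g ^ 2 * CF i - 6 * g ^ 2 * CF j))
      = 2 * SB + 2 * SF - 12 * g ^ 2 * SC := by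
    have P1 : (∑ α, ∑ i : Fin n, ∑ j : Fin n, 2 * yB α * Complex.normSq (Y α i j))
        = 2 * SB := by
      calc (∑ α, ∑ i : Fin n, ∑ j : Fin n, 2 * yB α * Complex.normSq (Y α i j))
          = ∑ α, 2 * yB α * ∑ i, ∑ j, Complex.normSq (Y α i j) := by
            simp only [← Finset.mul_sum]
        _ = ∑ α, 2 * yB α * yB α := Finset.sum_congr rfl fun α _ => by rw [hBtr α]
        _ = 2 * SB := by rw [hSB, Finset.mul_sum]; exact Finset.sum_congr rfl fun α _ => by ring
    have P2 : (∑ α, ∑ i, ∑ j : Fin n, yF i * Complex.normSq (Y α i j)) = SF := by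
      rw [Finset.sum_comm]
      calc (∑ i, ∑ α, ∑ j : Fin n, yF i * Complex.normSq (Y α i j))
          = ∑ i, yF i * ∑ α, ∑ j, Complex.normSq (Y α i j) := by
            simp only [← Finset.mul_sum]
        _ = ∑ i, yF i * yF i := Finset.sum_congr rfl fun i _ => by rw [hFi i]
        _ = SF := by rw [hSF]; exact Finset.sum_congr rfl fun i _ => (pow_two (yF i)).symm
    have P3 : (∑ α, ∑ i : Fin n, ∑ j, yF j * Complex.normSq (Y α i j)) = SF := by
      calc (∑ α, ∑ i : Fin n, ∑ j, yF j * Complex.normSq (Y α i j))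
          = ∑ α, ∑ j, ∑ i : Fin n, yF j * Complex.normSq (Y α i j) :=
            sw1 fun α i j => yF j * Complex.normSq (Y α i j)
        _ = ∑ j, ∑ α, ∑ i : Fin n, yF j * Complex.normSq (Y α i j) := Finset.sum_comm
        _ = ∑ j, yF j * ∑ α, ∑ i, Complex.normSq (Y α i j) := by
            simp only [← Finset.mul_sum]
        _ = ∑ j, yF j * yF j := Finset.sum_congr rfl fun j _ => by rw [hFj j]
        _ = SF := by rw [hSF]; exact Finset.sum_congr rfl fun j _ => (pow_two (yF j)).symm
    have P4 : (∑ α, ∑ i, ∑ j : Fin n, 6 * g ^ 2 * CF i * Complex.normSq (Y α i j))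
        = 6 * g ^ 2 * SC := by
      rw [Finset.sum_comm]
      calc (∑ i, ∑ α, ∑ j : Fin n, 6 * g ^ 2 * CF i * Complex.normSq (Y α i j))
          = ∑ i, 6 * g ^ 2 * CF i * ∑ α, ∑ j, Complex.normSq (Y α i j) := by
            simp only [← Finset.mul_sum]
        _ = ∑ i, 6 * g ^ 2 * CF i * yF i := Finset.sum_congr rfl fun i _ => by rw [hFi i]
        _ = 6 * g ^ 2 * SC := by
            rw [hSC, Finset.mul_sum]; exact Finset.sum_congr rfl fun i _ => by ring
    have P5 : (∑ α, ∑ i : Fin n, ∑ j, 6 * g ^ 2 * CF j * Complex.normSq (Y α i j))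
        = 6 * g ^ 2 * SC := by
      calc (∑ α, ∑ i : Fin n, ∑ j, 6 * g ^ 2 * CF j * Complex.normSq (Y α i j))
          = ∑ α, ∑ j, ∑ i : Fin n, 6 * g ^ 2 * CF j * Complex.normSq (Y α i j) :=
            sw1 fun α i j => 6 * g ^ 2 * CF j * Complex.normSq (Y α i j)
        _ = ∑ j, ∑ α, ∑ i : Fin n, 6 * g ^ 2 * CF j * Complex.normSq (Y α i j) :=
            Finset.sum_comm
        _ = ∑ j, 6 * g ^ 2 * CF j * ∑ α, ∑ i, Complex.normSq (Y α i j) := by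
            simp only [← Finset.mul_sum]
        _ = ∑ j, 6 * g ^ 2 * CF j * yF j := Finset.sum_congr rfl fun j _ => by rw [hFj j]
        _ = 6 * g ^ 2 * SC := by
            rw [hSC, Finset.mul_sum]; exact Finset.sum_congr rfl fun j _ => by ring
    calc (∑ α, ∑ i, ∑ j, Complex.normSq (Y α i j) *
        (2 * yB α + yF i + yF j - 6 * g ^ 2 * CF i - 6 * g ^ 2 * CF j))
        = ∑ α, ∑ i, ∑ j,
            (2 * yB α * Complex.normSq (Y α i j) + yF i * Complex.normSq (Y α i j)
              + yF j * Complex.normSq (Y α i j)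
              - 6 * g ^ 2 * CF i * Complex.normSq (Y α i j)
              - 6 * g ^ 2 * CF j * Complex.normSq (Y α i j)) :=
          Finset.sum_congr rfl fun α _ => Finset.sum_congr rfl fun i _ =>
            Finset.sum_congr rfl fun j _ => by ring
      _ = (∑ α, ∑ i : Fin n, ∑ j : Fin n, 2 * yB α * Complex.normSq (Y α i j))
          + (∑ α, ∑ i, ∑ j : Fin n, yF i * Complex.normSq (Y α i j))
          + (∑ α, ∑ i : Fin n, ∑ j, yF j * Complex.normSq (Y α i j))
          - (∑ α, ∑ i, ∑ j : Fin n, 6 * g ^ 2 * CF i * Complex.normSq (Y α i j))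
          - (∑ α, ∑ i : Fin n, ∑ j, 6 * g ^ 2 * CF j * Complex.normSq (Y α i j)) := by
          simp only [Finset.sum_add_distrib, Finset.sum_sub_distrib]
      _ = 2 * SB + 2 * SF - 12 * g ^ 2 * SC := by
          rw [P1, P2, P3, P4, P5]; ring
  -- rewrite the contraction
  have hT0 : (∑ α, ∑ i, ∑ j, conj (Y α i j) * ((∑ β, (Y β * (Y α)ᴴ * Y β)) i j))
      = ∑ α, ∑ i, ∑ j, ∑ β, ∑ k, ∑ l,
          conj (Y α i j) * (Y β i l * conj (Y α k l) * Y β k j) := by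
    refine Finset.sum_congr rfl fun α _ => Finset.sum_congr rfl fun i _ =>
      Finset.sum_congr rfl fun j _ => ?_
    rw [entry6 Y α i j]
    simp only [Finset.mul_sum]
  have h3 : (∑ α, ∑ i : Fin n, ∑ j : Fin n, conj (Y α i j) *
      (4 * (∑ β, (Y β * (Y α)ᴴ * Y β)) i j +
        Y α i j * ((2 * yB α + yF i + yF j
          - 6 * g ^ 2 * CF i - 6 * g ^ 2 * CF j : ℝ) : ℂ)))
      = 4 * (∑ i, ∑ j, ∑ k, ∑ l, conj (QQ Y i j k l) * QQ Y i l j k)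
        + ((2 * SB + 2 * SF - 12 * g ^ 2 * SC : ℝ) : ℂ) := by
    calc (∑ α, ∑ i : Fin n, ∑ j : Fin n, conj (Y α i j) *
        (4 * (∑ β, (Y β * (Y α)ᴴ * Y β)) i j +
          Y α i j * ((2 * yB α + yF i + yF j
            - 6 * g ^ 2 * CF i - 6 * g ^ 2 * CF j : ℝ) : ℂ)))
        = ∑ α, ∑ i, ∑ j,
            (4 * (conj (Y α i j) * ((∑ β, (Y β * (Y α)ᴴ * Y β)) i j))
              + ((Complex.normSq (Y α i j) : ℝ) : ℂ)
                * ((2 * yB α + yF i + yF j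
                    - 6 * g ^ 2 * CF i - 6 * g ^ 2 * CF j : ℝ) : ℂ)) := by
          refine Finset.sum_congr rfl fun α _ => Finset.sum_congr rfl fun i _ =>
            Finset.sum_congr rfl fun j _ => ?_
          rw [Complex.normSq_eq_conj_mul_self]
          ring
      _ = (∑ α, ∑ i, ∑ j, 4 * (conj (Y α i j) * ((∑ β, (Y β * (Y α)ᴴ * Y β)) i j)))
          + ∑ α, ∑ i, ∑ j, ((Complex.normSq (Y α i j) : ℝ) : ℂ)
              * ((2 * yB α + yF i + yF j
                  - 6 * g ^ 2 * CF i - 6 * g ^ 2 * CF j : ℝ) : ℂ) := by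
          simp only [Finset.sum_add_distrib]
      _ = 4 * (∑ α, ∑ i, ∑ j, conj (Y α i j) * ((∑ β, (Y β * (Y α)ᴴ * Y β)) i j))
          + ((∑ α, ∑ i, ∑ j, Complex.normSq (Y α i j) *
              (2 * yB α + yF i + yF j - 6 * g ^ 2 * CF i - 6 * g ^ 2 * CF j) : ℝ) : ℂ) := by
          congr 1
          · simp only [← Finset.mul_sum]
          · simp only [← Complex.ofReal_mul, ← Complex.ofReal_sum]
      _ = 4 * (∑ i, ∑ j, ∑ k, ∑ l, conj (QQ Y i j k l) * QQ Y i l j k)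
          + ((2 * SB + 2 * SF - 12 * g ^ 2 * SC : ℝ) : ℂ) := by
          rw [hT0, factorT Y hsym, hW]
  have h2 : 4 * (∑ i, ∑ j, ∑ k, ∑ l, conj (QQ Y i j k l) * QQ Y i l j k)
      + ((2 * SB + 2 * SF - 12 * g ^ 2 * SC : ℝ) : ℂ) = 0 := h3.symm.trans h1
  -- the quartic invariant is real
  have hTQr : (∑ i, ∑ j, ∑ k, ∑ l, conj (QQ Y i j k l) * QQ Y i l j k)
      = (((6 * g ^ 2 * SC - SB - SF) / 2 : ℝ) : ℂ) := by
    push_cast at h2 ⊢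
    linear_combination h2 / 4
  -- assemble the positivity identity
  have keyC := keyQ Y hsym
  rw [factorK Y, hTQr, Complex.conj_ofReal] at keyC
  simp only [← Complex.normSq_eq_conj_mul_self, ← Complex.ofReal_sum] at keyC
  -- real part of the Gram part
  have hKKre : (∑ α, ∑ β, (∑ j, ∑ i, conj (Y α i j) * Y β i j)
      * (∑ j, ∑ i, conj (Y α i j) * Y β i j)).re
      = SB - ∑ α, ∑ β, ((∑ j, ∑ i, conj (Y α i j) * Y β i j).im) ^ 2 := by
    rw [Complex.re_sum]
    calc (∑ α, (∑ β, (∑ j, ∑ i, conj (Y α i j) * Y β i j)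
          * (∑ j, ∑ i, conj (Y α i j) * Y β i j)).re)
        = ∑ α, ∑ β, (((∑ j, ∑ i, conj (Y α i j) * Y β i j).re) ^ 2
            - ((∑ j, ∑ i, conj (Y α i j) * Y β i j).im) ^ 2) := by
          refine Finset.sum_congr rfl fun α _ => ?_
          rw [Complex.re_sum]
          exact Finset.sum_congr rfl fun β _ => by rw [Complex.mul_re]; ring
      _ = (∑ α, ∑ β, ((∑ j, ∑ i, conj (Y α i j) * Y β i j).re) ^ 2)
          - ∑ α, ∑ β, ((∑ j, ∑ i, conj (Y α i j) * Y β i j).im) ^ 2 := by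
          simp only [Finset.sum_sub_distrib]
      _ = SB - ∑ α, ∑ β, ((∑ j, ∑ i, conj (Y α i j) * Y β i j).im) ^ 2 := by
          congr 1
          rw [hSB]
          refine Finset.sum_congr rfl fun α _ => ?_
          calc (∑ β, ((∑ j, ∑ i, conj (Y α i j) * Y β i j).re) ^ 2)
              = ∑ β, (if α = β then yB α ^ 2 else 0) := by
                refine Finset.sum_congr rfl fun β _ => ?_
                rw [hKre α β]
                split_ifs <;> simp
            _ = yB α ^ 2 := by rw [Finset.sum_ite_eq]; simp
  -- take real parts
  have hre := congrArg Complex.re keyC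
  simp only [Complex.ofReal_re, Complex.add_re, Complex.mul_re, Complex.re_ofNat,
    Complex.im_ofNat, Complex.ofReal_im, zero_mul, mul_zero, sub_zero] at hre
  rw [hKKre] at hre
  -- nonnegativity facts
  have hNN0 : 0 ≤ ∑ i, ∑ j, ∑ k, ∑ l,
      Complex.normSq (QQ Y i j k l + QQ Y i k j l + QQ Y i l j k) :=
    Finset.sum_nonneg fun i _ => Finset.sum_nonneg fun j _ => Finset.sum_nonneg fun k _ =>
      Finset.sum_nonneg fun l _ => Complex.normSq_nonneg _
  have hSI0 : 0 ≤ ∑ α, ∑ β, ((∑ j, ∑ i, conj (Y α i j) * Y β i j).im) ^ 2 :=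
    Finset.sum_nonneg fun α _ => Finset.sum_nonneg fun β _ => sq_nonneg _
  have hSB0 : 0 ≤ SB := by rw [hSB]; exact Finset.sum_nonneg fun α _ => sq_nonneg _
  -- the lower bound
  have hlow : SF ≤ 6 * g ^ 2 * SC := by linarith
  refine ⟨hlow, ?_⟩
  -- the upper bound, via Cauchy–Schwarz
  have hCS : SC ^ 2 ≤ SA * SF := by
    rw [hSC, hSA, hSF]
    exact Finset.sum_mul_sq_le_sq_mul_sq Finset.univ CF yF
  have hSC0 : 0 ≤ SC := by
    rw [hSC]; exact Finset.sum_nonneg fun i _ => mul_nonneg (hCF i) (hyF i).le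
  have hSA0 : 0 ≤ SA := by rw [hSA]; exact Finset.sum_nonneg fun i _ => sq_nonneg _
  by_cases hz : SC = 0
  · rw [hz, mul_zero]
    positivity
  · have hSCpos : 0 < SC := lt_of_le_of_ne hSC0 (Ne.symm hz)
    have hmul : SC * SC ≤ (6 * g ^ 2 * SA) * SC := by
      nlinarith [mul_le_mul_of_nonneg_left hlow hSA0]
    have hle : SC ≤ 6 * g ^ 2 * SA := le_of_mul_le_mul_right hmul hSCpos
    calc 6 * g ^ 2 * SC ≤ 6 * g ^ 2 * (6 * g ^ 2 * SA) := by
          have h6 : (0:ℝ) ≤ 6 * g ^ 2 := by positivity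
          exact mul_le_mul_of_nonneg_left hle h6
      _ = 36 * g ^ 4 * SA := by ring
end

section
/- Suppose in an irreducible YFC component with n fermionic indices, m bosonic indices, m ≠ 4, the ansatz x^{iα} = 6g² C_F^i/(4−m) + b holds (i.e. a = (4−m)^{-1}), with constraints Σ_{α=1}^m x^{iα} = y_F^i and the quasi-linear relation 8 x^{iα} − 2 y_F^i + 2 y_B^α = 6g²(C_F^i + C_F^j) on nonzero couplings with Σ_i x^{iα} = y_B^α. Then (4 − m) y_F^i = 6g² m (C_F^i − (Σ_{k=1}^n C_F^k)/(4 − m + n)) for all i, provided 4 − m + n ≠ 0. -/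
open Matrix

/-- Case C of Proposition 3: for `a = (4 - m)⁻¹`, i.e. `x^{iα} = 6 g² C_F^i/(4-m) + b`,
with the partial-trace constraints and the quasi-linear relation on nonzero Yukawa
couplings, one has `(4 - m) y_F^i = 6 g² m (C_F^i - (∑ₖ C_F^k)/(4 - m + n))` for all
`i`, provided `4 - m + n ≠ 0`. -/
theorem yfc_case_C (n m : ℕ) (g b : ℝ) (hm : (m : ℝ) ≠ 4)
    (h4mn : (4 : ℝ) - m + n ≠ 0)
    (Y : Fin m → Matrix (Fin n) (Fin n) ℂ) (hYsymm : ∀ α, (Y α).IsSymm)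
    (x : Fin n → Fin m → ℝ) (yF : Fin n → ℝ) (yB : Fin m → ℝ)
    (CF : Fin n → ℝ)
    (hansatz : ∀ i α, x i α = 6 * g ^ 2 * CF i / (4 - m) + b)
    (htrF : ∀ i, (∑ α, x i α) = yF i)
    (htrB : ∀ α, (∑ i, x i α) = yB α)
    (hql : ∀ (α : Fin m) (i j : Fin n), Y α i j ≠ 0 →
      8 * x i α - 2 * yF i + 2 * yB α = 6 * g ^ 2 * (CF i + CF j))
    (hnondegF : ∀ i, ∃ j α, Y α i j ≠ 0) :
    ∀ i, (4 - m) * yF i = 6 * g ^ 2 * m * (CF i - (∑ k, CF k) / (4 - m + n)) := by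
  have h4m : (4:ℝ) - m ≠ 0 := fun h => hm (by linarith)
  have hyF : ∀ i, yF i = m * (6*g^2*CF i/(4-m) + b) := by
    intro i
    rw [← htrF i, Finset.sum_congr rfl (fun α _ => hansatz i α), Finset.sum_const]
    simp only [Finset.card_univ, Fintype.card_fin, nsmul_eq_mul]
  have hyB : ∀ α, yB α = 6*g^2*(∑ k, CF k)/(4-m) + n*b := by
    intro α
    rw [← htrB α, Finset.sum_congr rfl (fun k _ => hansatz k α),
      Finset.sum_add_distrib, Finset.sum_const]
    rw [← Finset.sum_div, ← Finset.mul_sum]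
    simp [mul_comm]
  intro i
  obtain ⟨j, α, hY⟩ := hnondegF i
  have hYt : Y α j i ≠ 0 := by
    have h := hYsymm α
    rw [Matrix.IsSymm] at h
    intro h0
    apply hY
    calc Y α i j = (Y α)ᵀ j i := rfl
    _ = Y α j i := by rw [h]
    _ = 0 := h0
  have e1 := hql α i j hY
  have e2 := hql α j i hYt
  rw [hansatz, hyF, hyB] at e1 e2
  -- derive 6 g^2 CF j = 6 g^2 CF i
  have h12 : g^2 * CF j = g^2 * CF i := by
    have key : (4 - (m:ℝ)) * (g^2 * CF j - g^2 * CF i) = 0 := by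
      field_simp [h4m] at e1 e2
      linear_combination (e2 - e1) / 12
    rcases mul_eq_zero.mp key with h | h
    · exact absurd h h4m
    · linarith
  rw [hyF i]
  field_simp [h4m] at e1 ⊢
  linear_combination ((m:ℝ)/2)*e1 + 3*(m:ℝ)*(4-(m:ℝ))*h12
end
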